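/- Let v be a node of the suffix tree of a string S with children whose occurrence sets are pairwise disjoint, let ℓ ∈ [sd(u), sd(v)−1) for the parent edge (u,v), and let P be the prefix of str(v) of length ℓ+1. If P is periodic and some run containing occurrences of P contains at least two occurrences of P, then per(P) = per(str(v)) and the set of runs containing occurrences of P equals the set of runs containing occurrences of str(v). -/

import Mathlib

open Classical

/-- `p` is a period of the string (list) `P`. -/
def IsPeriodOf {α : Type*} (P : List α) (p : ℕ) : Prop :=
  0 < p ∧ ∀ i, i + p < P.length → P[i]? = P[i + p]?

/-- The smallest period of `P`. -/
noncomputable def minPeriod {α : Type*} (P : List α) : ℕ := sInf {p | IsPeriodOf P p}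

/-- `P` is periodic if its smallest period is at most `|P|/2`. -/
def ListPeriodic {α : Type*} (P : List α) : Prop := 2 * minPeriod P ≤ P.length

/-- `P` occurs in `S` starting at position `i`. -/
def OccursAt {α : Type*} (P S : List α) (i : ℕ) : Prop :=
  i + P.length ≤ S.length ∧ (S.drop i).take P.length = P

/-- The set of starting positions of occurrences of `P` in `S`. -/
noncomputable def occ {α : Type*} (P S : List α) : Finset ℕ :=
  (Finset.range (S.length + 1)).filter (fun i => OccursAt P S i)

/-- Hamming distance between two (equal-length) strings. -/
noncomputable def hamming {α : Type*} (S T : List α) : ℕ :=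
  ((List.range S.length).filter (fun i => S[i]? ≠ T[i]?)).length

/-- `P` is `(τ,k)`-resilient in `S`. -/
def Resilient {α : Type*} (P S : List α) (τ k : ℕ) : Prop :=
  ∀ S' : List α, S'.length = S.length → hamming S S' ≤ k → τ ≤ (occ P S').card

/-- The fragment `S[x..y]` (inclusive). -/
def frag {α : Type*} (S : List α) (x y : ℕ) : List α := (S.drop x).take (y - x + 1)

/-- The fragment `S[x..y]` is a run of `S`. -/
def IsRun {α : Type*} (S : List α) (x y : ℕ) : Prop :=
  x ≤ y ∧ y < S.length ∧ 2 * minPeriod (frag S x y) ≤ y - x + 1 ∧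
  (0 < x → ¬ IsPeriodOf (frag S (x - 1) y) (minPeriod (frag S x y))) ∧
  (y + 1 < S.length → ¬ IsPeriodOf (frag S x (y + 1)) (minPeriod (frag S x y)))

/-!
Two occurrences of `P` at distance `p = per(P)` are, by `occ P S = occ W S`, two occurrences of
`W` at distance `p`, so `p` is a period of `W`; as every period of `W` is one of its prefix `P`,
`per(P) = per(W)`. A run of period `p` containing `P` at `i` then contains `W` at `i` as well:
otherwise the `p`-periodic occurrence of `W`, overlapping the run in at least `|P| ≥ p` positions,
would extend the run to the right, against its maximality.
-/

section

variable {α : Type*}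

theorem isPeriodOf_minPeriod (P : List α) : IsPeriodOf P (minPeriod P) :=
  Nat.sInf_mem (s := {p | IsPeriodOf P p})
    ⟨P.length + 1, Nat.succ_pos _, fun _ hi => absurd hi (by omega)⟩

theorem minPeriod_le {P : List α} {p : ℕ} (h : IsPeriodOf P p) : minPeriod P ≤ p :=
  Nat.sInf_le h

theorem IsPeriodOf.of_prefix {P W : List α} (h : P <+: W) {p : ℕ} (hp : IsPeriodOf W p) :
    IsPeriodOf P p := by
  obtain ⟨t, rfl⟩ := h
  refine ⟨hp.1, fun i hi => ?_⟩
  have := hp.2 i (by simp only [List.length_append]; omega)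
  simpa [List.getElem?_append_left, hi, show i < P.length by omega] using this

theorem minPeriod_le_minPeriod_of_prefix {P W : List α} (h : P <+: W) :
    minPeriod P ≤ minPeriod W :=
  minPeriod_le ((isPeriodOf_minPeriod W).of_prefix h)

theorem mem_occ {P S : List α} {i : ℕ} : i ∈ occ P S ↔ OccursAt P S i := by
  simp only [occ, Finset.mem_filter, Finset.mem_range, and_iff_right_iff_imp]
  exact fun h => by have := h.1; omega

/-- `p` is a period of `S[x..y)`: half-open, unlike `frag S x y = S[x..y]`. -/
def IsPeriodOn (S : List α) (x y p : ℕ) : Prop :=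
  ∀ a, x ≤ a → a + p < y → S[a]? = S[a + p]?

theorem IsPeriodOn.mono_right {S : List α} {x y y' p : ℕ} (h : IsPeriodOn S x y p)
    (hy : y' ≤ y) : IsPeriodOn S x y' p :=
  fun a ha hap => h a ha (by omega)

theorem IsPeriodOn.union {S : List α} {x y i j p : ℕ} (h₁ : IsPeriodOn S x y p)
    (h₂ : IsPeriodOn S i j p) (hov : i + p ≤ y) : IsPeriodOn S x j p := by
  intro a ha hap
  by_cases hc : a + p < y
  · exact h₁ a ha hc
  · exact h₂ a (by omega) hap

theorem isPeriodOf_take_drop_iff {S : List α} {x n p : ℕ} (h : x + n ≤ S.length) :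
    IsPeriodOf ((S.drop x).take n) p ↔ 0 < p ∧ IsPeriodOn S x (x + n) p := by
  have hget : ∀ j, j < n → ((S.drop x).take n)[j]? = S[x + j]? := fun j hj => by
    simp [hj, List.getElem?_drop]
  have hlen : ((S.drop x).take n).length = n := by
    simp only [List.length_take, List.length_drop]; omega
  refine and_congr_right fun _ => ⟨fun hP a ha hap => ?_, fun hS j hj => ?_⟩
  · have := hP (a - x) (by omega)
    rwa [hget _ (by omega), hget _ (by omega), Nat.add_sub_cancel' ha,
      show x + (a - x + p) = a + p by omega] at this
  · rw [hget _ (by omega), hget _ (by omega), ← Nat.add_assoc]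
    exact hS (x + j) (by omega) (by omega)

theorem OccursAt.isPeriodOf_iff {W S : List α} {i p : ℕ} (h : OccursAt W S i) :
    IsPeriodOf W p ↔ 0 < p ∧ IsPeriodOn S i (i + W.length) p := by
  conv_lhs => rw [← h.2]
  exact isPeriodOf_take_drop_iff h.1

theorem OccursAt.getElem?_eq {W S : List α} {i j : ℕ} (h : OccursAt W S i) (hj : j < W.length) :
    W[j]? = S[i + j]? := by
  rw [← h.2]
  simp [hj, List.getElem?_drop]

theorem isPeriodOf_of_occursAt_of_occursAt_add {W S : List α} {i p : ℕ} (hp : 0 < p)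
    (h₁ : OccursAt W S i) (h₂ : OccursAt W S (i + p)) : IsPeriodOf W p := by
  refine ⟨hp, fun j hj => ?_⟩
  rw [h₂.getElem?_eq (by omega), h₁.getElem?_eq hj, Nat.add_right_comm, Nat.add_assoc]

theorem isPeriodOf_frag_iff {S : List α} {x y p : ℕ} (hxy : x ≤ y) (hy : y < S.length) :
    IsPeriodOf (frag S x y) p ↔ 0 < p ∧ IsPeriodOn S x (y + 1) p := by
  rw [frag, isPeriodOf_take_drop_iff (by omega), show x + (y - x + 1) = y + 1 by omega]

theorem IsRun.le_of_isPeriodOn {S : List α} {x y i j : ℕ} (hrun : IsRun S x y)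
    (hov : i + minPeriod (frag S x y) ≤ y + 1)
    (hij : IsPeriodOn S i j (minPeriod (frag S x y))) (hj : j ≤ S.length) : j ≤ y + 1 := by
  obtain ⟨hxy, hyS, -, -, hmax⟩ := hrun
  by_contra! hjy
  obtain ⟨hp, hrunper⟩ := (isPeriodOf_frag_iff hxy hyS).1 (isPeriodOf_minPeriod (frag S x y))
  refine hmax (by omega) ((isPeriodOf_frag_iff (by omega) (by omega)).2 ⟨hp, ?_⟩)
  exact (hrunper.union hij (by omega)).mono_right hjy

end

theorem stmt16_general {α : Type*} (S P W : List α) (hprefix : P <+: W)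
    (hocc : occ P S = occ W S) (hper : ListPeriodic P)
    (htwo : ∃ i, OccursAt P S i ∧ OccursAt P S (i + minPeriod P)) :
    minPeriod P = minPeriod W ∧
    {r : ℕ × ℕ | IsRun S r.1 r.2 ∧ minPeriod (frag S r.1 r.2) = minPeriod P ∧
        ∃ i, OccursAt P S i ∧ r.1 ≤ i ∧ i + P.length ≤ r.2 + 1} =
    {r : ℕ × ℕ | IsRun S r.1 r.2 ∧ minPeriod (frag S r.1 r.2) = minPeriod W ∧
        ∃ i, OccursAt W S i ∧ r.1 ≤ i ∧ i + W.length ≤ r.2 + 1} := by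
  have hPW : ∀ i, OccursAt P S i ↔ OccursAt W S i := fun i => by rw [← mem_occ, hocc, mem_occ]
  obtain ⟨i₀, h₁, h₂⟩ := htwo
  have hWper : IsPeriodOf W (minPeriod P) := isPeriodOf_of_occursAt_of_occursAt_add
    (isPeriodOf_minPeriod P).1 ((hPW _).1 h₁) ((hPW _).1 h₂)
  have hmin : minPeriod P = minPeriod W :=
    (minPeriod_le_minPeriod_of_prefix hprefix).antisymm (minPeriod_le hWper)
  refine ⟨hmin, Set.ext fun ⟨x, y⟩ => ⟨?_, ?_⟩⟩
  · rintro ⟨hrun, hrunper, i, hPi, hxi, hiy⟩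
    have hWi := (hPW i).1 hPi
    refine ⟨hrun, hrunper.trans hmin, i, hWi, hxi, hrun.le_of_isPeriodOn (i := i) ?_ ?_ hWi.1⟩
    · have : 2 * minPeriod P ≤ P.length := hper
      simp only at hrunper hiy ⊢
      omega
    · rw [hrunper]
      exact (hWi.isPeriodOf_iff.1 hWper).2
  · rintro ⟨hrun, hrunper, i, hWi, hxi, hiy⟩
    have := hprefix.length_le
    exact ⟨hrun, hrunper.trans hmin.symm, i, (hPW i).2 hWi, hxi, by omega⟩

theorem stmt16 {α : Type*} (S P W : List α) (hprefix : P <+: W)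
    (hlt : P.length < W.length)
    (hocc : occ P S = occ W S) (hper : ListPeriodic P)
    (htwo : ∃ i, OccursAt P S i ∧ OccursAt P S (i + minPeriod P)) :
    minPeriod P = minPeriod W ∧
    {r : ℕ × ℕ | IsRun S r.1 r.2 ∧ minPeriod (frag S r.1 r.2) = minPeriod P ∧
        ∃ i, OccursAt P S i ∧ r.1 ≤ i ∧ i + P.length ≤ r.2 + 1} =
    {r : ℕ × ℕ | IsRun S r.1 r.2 ∧ minPeriod (frag S r.1 r.2) = minPeriod W ∧
        ∃ i, OccursAt W S i ∧ r.1 ≤ i ∧ i + W.length ≤ r.2 + 1} :=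
  stmt16_general S P W hprefix hocc hper htwo
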